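/- For n = 3, A_{21}⁺ ∘ A_{21}⁻ = m_g, where g = −((x_{31}−x_{21}+1)(x_{32}−x_{21}+1)(x_{33}−x_{21}+1)/(x_{22}−x_{21}+1))·((x_{11}−x_{21})/(x_{22}−x_{21})) ∈ L; moreover g is not a polynomial, i.e. g ∉ Λ. In particular 𝒜(gl_3) contains a multiplication operator by a non-polynomial rational function, which commutes with m_γ for every γ ∈ Λ. -/

import Mathlib

/-!
Since `δ ∘ m_a ∘ δ⁻¹ = m_{δ(a)}`, the product `A_{21}⁺ A_{21}⁻` is multiplication by
`δ^{21}(a_{21}⁺) · a_{21}⁻ = g`. Writing `g = N / D` with `D = (x₂₂ - x₂₁ + 1)(x₂₂ - x₂₁)`, a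
polynomial `p = g` would give `p D = N` in `Λ`; at the point `x₁₁ = 1`, all other variables `0`,
the left side vanishes while `N = -1`.
-/

open scoped BigOperators
open MvPolynomial

noncomputable section

/-- The polynomial ring `Λ = ℂ[x_{ki}]` (variables indexed by pairs `(k, i)`). -/
abbrev Lam : Type := MvPolynomial (ℕ × ℕ) ℂ

/-- `L`, the field of fractions of `Λ`. -/
abbrev L : Type := FractionRing Lam

/-- The variable `x_{ki}` as an element of `L`. -/
def x (k i : ℕ) : L := algebraMap Lam L (X (k, i))

/-- The algebra automorphism of `Λ` sending `x_v ↦ x_v - 1` and fixing the other variables. -/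
def shiftEquiv (v : ℕ × ℕ) : Lam ≃ₐ[ℂ] Lam :=
  AlgEquiv.ofAlgHom
    (aeval (fun w => if w = v then X w - 1 else X w))
    (aeval (fun w => if w = v then X w + 1 else X w))
    (by apply MvPolynomial.algHom_ext; intro w; by_cases h : w = v <;> simp [h])
    (by apply MvPolynomial.algHom_ext; intro w; by_cases h : w = v <;> simp [h])

/-- The automorphism `δ^{ki}` of `L`, determined by `δ^{ki}(x_{ℓj}) = x_{ℓj} - δ_{ℓk}δ_{ij}`. -/
def δ (k i : ℕ) : L ≃ₐ[ℂ] L := IsFractionRing.algEquivOfAlgEquiv (shiftEquiv (k, i))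

/-- Multiplication by `a ∈ L` as a `ℂ`-linear endomorphism `m_a` of `L`. -/
def mulOp (a : L) : Module.End ℂ L := LinearMap.mulLeft ℂ a

/-- A field automorphism of `L` as a `ℂ`-linear endomorphism of `L`. -/
def lin (e : L ≃ₐ[ℂ] L) : Module.End ℂ L := e.toLinearMap

/-- The rational function `a_{ki}^+`. -/
def aP (k i : ℕ) : L :=
  -((∏ j ∈ Finset.Icc 1 (k + 1), (x (k + 1) j - x k i)) /
    ∏ j ∈ (Finset.Icc 1 k).erase i, (x k j - x k i))

/-- The rational function `a_{ki}^-`. -/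
def aM (k i : ℕ) : L :=
  (∏ j ∈ Finset.Icc 1 (k - 1), (x (k - 1) j - x k i)) /
    ∏ j ∈ (Finset.Icc 1 k).erase i, (x k j - x k i)

/-- The operator `A_{ki}^+ = δ^{ki} ∘ m_{a_{ki}^+}`. -/
def Ap (k i : ℕ) : Module.End ℂ L := lin (δ k i) * mulOp (aP k i)

/-- The operator `A_{ki}^- = (δ^{ki})^{-1} ∘ m_{a_{ki}^-}`. -/
def Am (k i : ℕ) : Module.End ℂ L := lin (δ k i).symm * mulOp (aM k i)

/-- The operator `X_k^+ = ∑_{i=1}^k A_{ki}^+`. -/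
def Xp (k : ℕ) : Module.End ℂ L := ∑ i ∈ Finset.Icc 1 k, Ap k i

/-- The operator `X_k^- = ∑_{i=1}^k A_{ki}^-`. -/
def Xm (k : ℕ) : Module.End ℂ L := ∑ i ∈ Finset.Icc 1 k, Am k i

/-- The operator `X_{kk}`. -/
def Xd (k : ℕ) : Module.End ℂ L :=
  mulOp ((∑ j ∈ Finset.Icc 1 k, (x k j + (j : L) - 1)) -
    ∑ i ∈ Finset.Icc 1 (k - 1), (x (k - 1) i + (i : L) - 1))

/-- The Vandermonde polynomial `∏_{1 ≤ i < j ≤ k} (x_{ki} - x_{kj})`, as an element of `L`. -/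
def vand (k : ℕ) : L :=
  ∏ p ∈ (Finset.Icc 1 k ×ˢ Finset.Icc 1 k).filter (fun p => p.1 < p.2),
    (x k p.1 - x k p.2)

/-- The operator `𝒱_k = m_{∏_{i<j}(x_{ki} - x_{kj})}`. -/
def Vop (k : ℕ) : Module.End ℂ L := mulOp (vand k)

/-- The generating set of `U_n`: the `X_k^±` for `1 ≤ k ≤ n-1` and the `X_{kk}` for `1 ≤ k ≤ n`. -/
def Ugens (n : ℕ) : Set (Module.End ℂ L) :=
  {u | ∃ k, 1 ≤ k ∧ k + 1 ≤ n ∧ (u = Xp k ∨ u = Xm k)} ∪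
    {u | ∃ k, 1 ≤ k ∧ k ≤ n ∧ u = Xd k}

/-- `U_n`, the Gelfand–Tsetlin realization of `U(gl_n)` inside `End_ℂ(L)`. -/
def Ualg (n : ℕ) : Subalgebra ℂ (Module.End ℂ L) := Algebra.adjoin ℂ (Ugens n)

/-- `𝒜(gl_n)`, the subalgebra generated by `U_n` together with `𝒱_2, …, 𝒱_n`. -/
def Agl (n : ℕ) : Subalgebra ℂ (Module.End ℂ L) :=
  Algebra.adjoin ℂ (Ugens n ∪ {u | ∃ k, 2 ≤ k ∧ k ≤ n ∧ u = Vop k})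

/-- The non-polynomial rational function `g` with `A_{21}⁺ ∘ A_{21}⁻ = m_g`. -/
def gRat : L :=
  -(((x 3 1 - x 2 1 + 1) * (x 3 2 - x 2 1 + 1) * (x 3 3 - x 2 1 + 1)) /
      (x 2 2 - x 2 1 + 1) * ((x 1 1 - x 2 1) / (x 2 2 - x 2 1)))

theorem div_notMem_range_algebraMap {R K S : Type*} [CommRing R] [Field K] [Algebra R K]
    [IsFractionRing R K] [CommRing S] (φ : R →+* S) {n d : R} (hd : d ≠ 0)
    (hφd : φ d = 0) (hφn : φ n ≠ 0) :
    algebraMap R K n / algebraMap R K d ∉ Set.range (algebraMap R K) := by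
  rintro ⟨p, hp⟩
  have hd' : algebraMap R K d ≠ 0 :=
    (map_ne_zero_iff _ (IsFractionRing.injective R K)).mpr hd
  have hn : n = p * d := IsFractionRing.injective R K <| by
    rw [map_mul, hp, div_mul_cancel₀ _ hd']
  exact hφn (by rw [hn, map_mul, hφd, mul_zero])

theorem mulOp_mul (a b : L) : mulOp a * mulOp b = mulOp (a * b) :=
  (LinearMap.mulLeft_mul (R := ℂ) (A := L) a b).symm

theorem mulOp_commute (a b : L) : Commute (mulOp a) (mulOp b) := by
  rw [Commute, SemiconjBy, mulOp_mul, mulOp_mul, mul_comm]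

theorem lin_mul_mulOp_mul_lin_symm (e : L ≃ₐ[ℂ] L) (a : L) :
    lin e * mulOp a * lin e.symm = mulOp (e a) := by
  ext f
  simp [lin, mulOp]

theorem δ_x (k i l j : ℕ) :
    δ k i (x l j) = if (l, j) = (k, i) then x l j - 1 else x l j := by
  rw [δ, x, IsFractionRing.algEquivOfAlgEquiv_algebraMap]
  change algebraMap Lam L (aeval (fun w => if w = (k, i) then X w - 1 else X w) (X (l, j))) = _
  split_ifs <;> simp [*]

theorem aP_two_one :
    aP 2 1 = -((x 3 1 - x 2 1) * (x 3 2 - x 2 1) * (x 3 3 - x 2 1) / (x 2 2 - x 2 1)) := by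
  rw [aP, show Finset.Icc 1 3 = {1, 2, 3} by decide, show (Finset.Icc 1 2).erase 1 = {2} by decide]
  simp [mul_assoc]

theorem aM_two_one : aM 2 1 = (x 1 1 - x 2 1) / (x 2 2 - x 2 1) := by
  rw [aM, show Finset.Icc 1 (2 - 1) = {1} by decide, show (Finset.Icc 1 2).erase 1 = {2} by decide]
  simp

theorem δ_aP_two_one_mul_aM_two_one : δ 2 1 (aP 2 1) * aM 2 1 = gRat := by
  simp only [aP_two_one, aM_two_one, gRat, map_neg, map_div₀, map_mul, map_sub, δ_x,
    Prod.mk.injEq, Nat.reduceEqDiff, and_true, and_false, if_true, if_false]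
  ring

theorem gRat_eq_div : gRat = algebraMap Lam L
      (-((X (3, 1) - X (2, 1) + 1) * (X (3, 2) - X (2, 1) + 1) * (X (3, 3) - X (2, 1) + 1) *
        (X (1, 1) - X (2, 1)))) /
    algebraMap Lam L ((X (2, 2) - X (2, 1) + 1) * (X (2, 2) - X (2, 1))) := by
  rw [gRat, div_mul_div_comm, ← neg_div]
  simp [x]

/-- `A_{21}⁺ ∘ A_{21}⁻ = m_g`, `g` is not a polynomial, and `m_g` commutes
with `m_γ` for every `γ ∈ Λ`. -/
theorem A21P_A21M_is_nonpolynomial_multiplication :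
    Ap 2 1 * Am 2 1 = mulOp gRat ∧
    gRat ∉ Set.range (algebraMap Lam L) ∧
    ∀ γ : Lam, mulOp gRat * mulOp (algebraMap Lam L γ) =
      mulOp (algebraMap Lam L γ) * mulOp gRat := by
  refine ⟨?_, ?_, fun γ => (mulOp_commute _ _).eq⟩
  · rw [Ap, Am, ← mul_assoc, lin_mul_mulOp_mul_lin_symm, mulOp_mul,
      δ_aP_two_one_mul_aM_two_one]
  · rw [gRat_eq_div]
    refine div_notMem_range_algebraMap (eval fun v : ℕ × ℕ => if v = (1, 1) then (1 : ℂ) else 0)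
      (fun h => by simpa using congrArg (eval fun v => if v = (2, 2) then (1 : ℂ) else 0) h)
      (by simp) (by simp)
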